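/- There exists a marriage problem with three men and three women such that the man-proposing deferred acceptance mechanism DA^M violates the Fixed compromiser condition; consequently, for this problem DA^M is not a local priority mechanism. -/

import Mathlib

/- Common framework: constrained allocation, local priority mechanisms
   (Root & Ahn, "Local Priority Mechanisms"). Agents `N`, objects `O`.
   A strict preference is encoded as a `LinearOrder` on `O`, where
   `pi.lt b a` means `a` is strictly preferred to `b`. -/

open Classical

noncomputable section

variable {N O : Type}

/-- `a` is strictly preferred to `b` under `pi`. -/
def sPref (pi : LinearOrder O) (a b : O) : Prop := pi.lt b a

/-- `a` is weakly preferred to `b` under `pi`. -/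
def wPref (pi : LinearOrder O) (a b : O) : Prop := a = b ∨ pi.lt b a

/-- The favourite (top-ranked) object under `pi`. -/
def topObj [Fintype O] [Nonempty O] (pi : LinearOrder O) : O :=
  @Finset.max' O pi Finset.univ Finset.univ_nonempty

/-- `tau1 p` is the allocation assigning each agent her favourite object. -/
def tau1 [Fintype O] [Nonempty O] (p : N → LinearOrder O) : N → O :=
  fun i => topObj (p i)

/-- The strict lower contour set of `a` under `pi`, as a finset. -/
def LCfin [Fintype O] (pi : LinearOrder O) (a : O) : Finset O :=
  Finset.univ.filter fun b => pi.lt b a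

/-- The best element of the strict lower contour set of `a` (junk value `a` if empty). -/
def bestLC [Fintype O] (pi : LinearOrder O) (a : O) : O :=
  if h : (LCfin pi a).Nonempty then @Finset.max' O pi _ h else a

/-- At `x`, no local compromiser has an empty strict lower contour set. -/
def lpNoFail [Fintype O] (α : (N → O) → Set N) (p : N → LinearOrder O) (x : N → O) : Prop :=
  ∀ i ∈ α x, (LCfin (p i) (x i)).Nonempty

/-- One step of the local priority algorithm: all local compromisers move to their
next-favourite object, everyone else stays put. -/
def lpStep [Fintype O] (α : (N → O) → Set N) (p : N → LinearOrder O) (x : N → O) : N → O :=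
  fun k => if k ∈ α x then bestLC (p k) (x k) else x k

/-- The local priority algorithm for `α` at profile `p` terminates (without failure)
returning the feasible allocation `y`. -/
def lpRunsTo [Fintype O] [Nonempty O] (C : Set (N → O)) (α : (N → O) → Set N)
    (p : N → LinearOrder O) (y : N → O) : Prop :=
  ∃ (m : ℕ) (x : ℕ → N → O),
    x 0 = tau1 p ∧
    (∀ t < m, x t ∉ C ∧ lpNoFail α p (x t) ∧ x (t + 1) = lpStep α p (x t)) ∧
    x m = y ∧ y ∈ C

/-- `α` is a local compromiser assignment for the constraint `C`. -/
def IsLCA (C : Set (N → O)) (α : (N → O) → Set N) : Prop :=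
  ∀ x, (x ∉ C → (α x).Nonempty) ∧ (x ∈ C → α x = ∅)

/-- `α` is implementable: the local priority algorithm returns a feasible
allocation (never the failure symbol) on every profile. -/
def lpImplementable [Fintype O] [Nonempty O] (C : Set (N → O)) (α : (N → O) → Set N) : Prop :=
  ∀ p : N → LinearOrder O, ∃ y, lpRunsTo C α p y

/-- `α` is an implementable local compromiser assignment for `C` inducing the mechanism `f`,
i.e. `f = LP_α`. -/
def lpInduces [Fintype O] [Nonempty O] (C : Set (N → O)) (α : (N → O) → Set N)
    (f : (N → LinearOrder O) → N → O) : Prop :=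
  IsLCA C α ∧ ∀ p, lpRunsTo C α p (f p)

/-- The local priority mechanism `LP_α` (well defined whenever `α` is implementable,
since the algorithm is deterministic). -/
def LPmech [Fintype O] [Nonempty O] (C : Set (N → O)) (α : (N → O) → Set N)
    (p : N → LinearOrder O) : N → O :=
  if h : ∃ y, lpRunsTo C α p y then h.choose else fun _ => Classical.arbitrary O

/-- Group strategy-proofness. -/
def GSP (f : (N → LinearOrder O) → N → O) : Prop :=
  ∀ (p p' : N → LinearOrder O) (M : Set N), M.Nonempty → (∀ j ∉ M, p' j = p j) →
    ¬ ((∀ j ∈ M, wPref (p j) (f p' j) (f p j)) ∧ ∃ k ∈ M, sPref (p k) (f p' k) (f p k))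

/-- (Individual) strategy-proofness. -/
def StratProof (f : (N → LinearOrder O) → N → O) : Prop :=
  ∀ (p p' : N → LinearOrder O) (i : N), (∀ j, j ≠ i → p' j = p j) →
    ¬ sPref (p i) (f p' i) (f p i)

/-- Nonbossiness. -/
def Nonbossy (f : (N → LinearOrder O) → N → O) : Prop :=
  ∀ (p p' : N → LinearOrder O) (i : N), (∀ j, j ≠ i → p' j = p j) →
    f p' i = f p i → f p' = f p

/-- Maskin monotonicity. -/
def MaskinMono (f : (N → LinearOrder O) → N → O) : Prop :=
  ∀ p p' : N → LinearOrder O,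
    (∀ (i : N) (b : O), (p i).lt b (f p i) → (p' i).lt b (f p i)) → f p' = f p

/-- Unanimity. -/
def Unanimity [Fintype O] [Nonempty O] (C : Set (N → O))
    (f : (N → LinearOrder O) → N → O) : Prop :=
  ∀ p, tau1 p ∈ C → f p = tau1 p

/-- The Fixed compromiser condition. -/
def FixedComp [Fintype O] [Nonempty O] (C : Set (N → O))
    (f : (N → LinearOrder O) → N → O) : Prop :=
  ∀ μ, μ ∉ C → ∃ i : N, ∀ p, tau1 p = μ → f p i ≠ μ i

/-- `pi'` is obtained from `pi` by moving `c` to the bottom of the ranking. -/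
def MoveBottom (pi pi' : LinearOrder O) (c : O) : Prop :=
  (∀ b, b ≠ c → pi'.lt c b) ∧ (∀ a b, a ≠ c → b ≠ c → (pi'.lt a b ↔ pi.lt a b))

/-- Compromiser invariance. -/
def CompInv [Fintype O] [Nonempty O] (C : Set (N → O))
    (f : (N → LinearOrder O) → N → O) : Prop :=
  ∀ μ, μ ∉ C → ∀ p p' : N → LinearOrder O, tau1 p = μ →
    (∀ i, (∀ q, tau1 q = μ → f q i ≠ μ i) → MoveBottom (p i) (p' i) (μ i)) →
    (∀ i, ¬ (∀ q, tau1 q = μ → f q i ≠ μ i) → p' i = p i) →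
    f p' = f p

/-- Pareto efficiency relative to the constraint `C`. -/
def ParetoEff (C : Set (N → O)) (f : (N → LinearOrder O) → N → O) : Prop :=
  ∀ p, ¬ ∃ ν ∈ C, (∀ i, wPref (p i) (ν i) (f p i)) ∧ ∃ k, sPref (p k) (ν k) (f p k)

/-- `diffSet x y = d(x,y)`, the set of agents on which `x` and `y` differ. -/
def diffSet (x y : N → O) : Set N := {i | x i ≠ y i}

/-- Forward consistency. -/
def ForwardCons (α : (N → O) → Set N) : Prop :=
  ∀ x y : N → O, diffSet x y ⊆ α x → α x \ diffSet x y ⊆ α y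

/-- The sequence of allocations `z 0, …, z m` is acyclic. -/
def AcyclicSeq (z : ℕ → N → O) (m : ℕ) : Prop :=
  ∀ (i : N) (r s t : ℕ), r < s → s < t → t ≤ m → z r i = z t i → z s i = z r i

/-- `x` and `y` are `i`-connected under `α`. -/
def IConn (α : (N → O) → Set N) (i : N) (x y : N → O) : Prop :=
  ∃ m : ℕ, 1 ≤ m ∧ ∃ z : ℕ → N → O,
    z 0 = x ∧ z m = y ∧ AcyclicSeq z m ∧ diffSet (z 0) (z 1) = {i} ∧
    ∀ l < m, diffSet (z l) (z (l + 1)) ⊆ α (z l)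

/-- Backward consistency. -/
def BackCons (C : Set (N → O)) (α : (N → O) → Set N) : Prop :=
  ∀ (i : N) (x y : N → O), x ∉ C → y ∉ C → IConn α i x y →
    ∀ x' : N → O, diffSet x x' ⊆ α y → i ∉ diffSet x x' → i ∈ α x'

/-- The pointwise union of all implementable local compromiser assignments inducing `f`. -/
def alphaUnionAll [Fintype O] [Nonempty O] (C : Set (N → O))
    (f : (N → LinearOrder O) → N → O) : (N → O) → Set N :=
  fun x => {i | ∃ β, lpInduces C β f ∧ i ∈ β x}

end

noncomputable section

variable {Mn Wn : Type}

/-- The marriage constraint: men are matched to women or themselves, women to men or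
themselves, and the matching is involutive. -/
def MarriageC (Mn Wn : Type) : Set ((Mn ⊕ Wn) → (Mn ⊕ Wn)) :=
  {μ | (∀ m : Mn, (∃ w : Wn, μ (Sum.inl m) = Sum.inr w) ∨ μ (Sum.inl m) = Sum.inl m) ∧
       (∀ w : Wn, (∃ m : Mn, μ (Sum.inr w) = Sum.inl m) ∨ μ (Sum.inr w) = Sum.inr w) ∧
       (∀ k, μ (μ k) = k)}

/-- With cumulative rejection set `R`, man `m` proposes to his favourite woman among
those he prefers to remaining single and who have not rejected him (`none` if there is
no such woman). -/
def damProp [Fintype Mn] [Fintype Wn]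
    (p : (Mn ⊕ Wn) → LinearOrder (Mn ⊕ Wn)) (R : Set (Mn × Wn)) (m : Mn) :
    Option (Mn ⊕ Wn) :=
  if h : (Finset.univ.filter fun o : Mn ⊕ Wn =>
      (∃ w : Wn, o = Sum.inr w ∧ (m, w) ∉ R) ∧
        (p (Sum.inl m)).lt (Sum.inl m) o).Nonempty
  then some (@Finset.max' _ (p (Sum.inl m)) _ h) else none

/-- The new rejections of the current round: `w` rejects a proposer `m` if she finds
him unacceptable or some acceptable proposer is better for her. -/
def damRej [Fintype Mn] [Fintype Wn]
    (p : (Mn ⊕ Wn) → LinearOrder (Mn ⊕ Wn)) (R : Set (Mn × Wn)) : Set (Mn × Wn) :=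
  {mw : Mn × Wn | damProp p R mw.1 = some (Sum.inr mw.2) ∧
    (¬ (p (Sum.inr mw.2)).lt (Sum.inr mw.2) (Sum.inl mw.1) ∨
      ∃ m' : Mn, damProp p R m' = some (Sum.inr mw.2) ∧
        (p (Sum.inr mw.2)).lt (Sum.inr mw.2) (Sum.inl m') ∧
        (p (Sum.inr mw.2)).lt (Sum.inl mw.1) (Sum.inl m'))}

/-- The man-proposing deferred acceptance algorithm at profile `p` terminates with the
matching `μ`: rejections accumulate until a round with no rejections, at which point
every proposing man is matched with the woman he proposes to and all other agents are
single. -/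
def DAMRuns [Fintype Mn] [Fintype Wn]
    (p : (Mn ⊕ Wn) → LinearOrder (Mn ⊕ Wn)) (μ : (Mn ⊕ Wn) → (Mn ⊕ Wn)) : Prop :=
  ∃ (k : ℕ) (R : ℕ → Set (Mn × Wn)),
    R 0 = ∅ ∧
    (∀ t < k, damRej p (R t) ≠ ∅ ∧ R (t + 1) = R t ∪ damRej p (R t)) ∧
    damRej p (R k) = ∅ ∧
    (∀ m : Mn, μ (Sum.inl m) = (damProp p (R k) m).getD (Sum.inl m)) ∧
    (∀ (w : Wn) (m : Mn), damProp p (R k) m = some (Sum.inr w) →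
      μ (Sum.inr w) = Sum.inl m) ∧
    (∀ w : Wn, (∀ m : Mn, damProp p (R k) m ≠ some (Sum.inr w)) →
      μ (Sum.inr w) = Sum.inr w)

end

/-!
A local priority mechanism satisfies the Fixed compromiser condition: at an infeasible top
allocation `μ`, an agent of `α μ` moves strictly down in the first step of the algorithm and
never moves back up, so she never receives `μ i`.

`DA^M` violates it. Take two profiles with the same infeasible top allocation `μ`, in which
men `0, 1` and women `0, 1` rank each other first crosswise. At the first, the women accept
the men's first proposals, so every man gets his `μ`-partner; at the second, the rejections
lead to the matching that every woman ranks first, so every woman gets hers. Hence no agent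
is a compromiser at every profile of `P^μ`.
-/

section LocalPriority

variable {N O : Type} [Fintype O]

lemma bestLC_lt (pi : LinearOrder O) {a : O} (h : (LCfin pi a).Nonempty) :
    pi.lt (bestLC pi a) a := by
  rw [bestLC, dif_pos h]
  exact (Finset.mem_filter.mp (@Finset.max'_mem O pi _ h)).2

lemma lpStep_le {α : (N → O) → Set N} {p : N → LinearOrder O} {x : N → O}
    (hx : lpNoFail α p x) (k : N) : (p k).le (lpStep α p x k) (x k) := by
  let _ := p k
  unfold lpStep
  split_ifs with hk
  · exact (bestLC_lt (p k) (hx k hk)).le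
  · exact le_rfl

lemma lpRunsTo_lt_of_mem [Nonempty O] {C : Set (N → O)} {α : (N → O) → Set N}
    {p : N → LinearOrder O} {y : N → O} (hrun : lpRunsTo C α p y) (hC : tau1 p ∉ C)
    {i : N} (hi : i ∈ α (tau1 p)) : (p i).lt (y i) (tau1 p i) := by
  let _ := p i
  obtain ⟨m, x, hx0, hstep, rfl, hmC⟩ := hrun
  have hm : m ≠ 0 := by
    rintro rfl
    exact hC (hx0 ▸ hmC)
  have hdesc : ∀ t, t + 1 ≤ m → x (t + 1) i < tau1 p i := by
    intro t ht
    obtain ⟨-, hnf, hs⟩ := hstep t ht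
    induction t with
    | zero =>
      rw [hx0] at hnf hs
      rw [hs, lpStep, if_pos hi]
      exact bestLC_lt (p i) (hnf i hi)
    | succ t ih =>
      obtain ⟨-, hnf', hs'⟩ := hstep t (by omega)
      rw [hs]
      exact (lpStep_le hnf i).trans_lt (ih (by omega) hnf' hs')
  obtain ⟨t, rfl⟩ := Nat.exists_eq_succ_of_ne_zero hm
  exact hdesc t le_rfl

theorem fixedComp_of_lpInduces [Nonempty O] {C : Set (N → O)} {α : (N → O) → Set N}
    {f : (N → LinearOrder O) → N → O} (h : lpInduces C α f) : FixedComp C f := by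
  intro μ hμ
  obtain ⟨i, hi⟩ := (h.1 μ).1 hμ
  refine ⟨i, fun p hp => ?_⟩
  subst hp
  let _ := p i
  exact (lpRunsTo_lt_of_mem (h.2 p) hμ hi).ne

end LocalPriority

section DeferredAcceptance

variable {Mn Wn : Type} [Fintype Mn] [Fintype Wn] {p : (Mn ⊕ Wn) → LinearOrder (Mn ⊕ Wn)}
  {R : Set (Mn × Wn)}

lemma notMem_of_damProp_eq_some {m : Mn} {w : Wn}
    (h : damProp p R m = some (Sum.inr w)) : (m, w) ∉ R := by
  rw [damProp] at h
  split at h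
  · rename_i hne
    obtain ⟨⟨w', hw', hR⟩, -⟩ := (Finset.mem_filter.mp (Option.some_inj.mp h ▸
      @Finset.max'_mem _ (p (Sum.inl m)) _ hne)).2
    cases Sum.inr.inj hw'
    exact hR
  · cases h

lemma damProp_eq_some {m : Mn} {w : Wn} (hw : (m, w) ∉ R)
    (hacc : (p (Sum.inl m)).lt (Sum.inl m) (Sum.inr w))
    (hbest : ∀ w', (m, w') ∉ R → (p (Sum.inl m)).lt (Sum.inl m) (Sum.inr w') →
      (p (Sum.inl m)).le (Sum.inr w') (Sum.inr w)) :
    damProp p R m = some (Sum.inr w) := by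
  have hmem : Sum.inr w ∈ (Finset.univ.filter fun o : Mn ⊕ Wn =>
      (∃ w : Wn, o = Sum.inr w ∧ (m, w) ∉ R) ∧ (p (Sum.inl m)).lt (Sum.inl m) o) :=
    Finset.mem_filter.mpr ⟨Finset.mem_univ _, ⟨w, rfl, hw⟩, hacc⟩
  rw [damProp, dif_pos (Finset.nonempty_def.mpr ⟨_, hmem⟩), Option.some_inj]
  let _ := p (Sum.inl m)
  rw [Finset.max'_eq_iff]
  refine ⟨hmem, fun b hb => ?_⟩
  obtain ⟨-, ⟨w', rfl, hw'⟩, hlt⟩ := Finset.mem_filter.mp hb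
  exact hbest w' hw' hlt

lemma damProp_eq_none {m : Mn}
    (h : ∀ w : Wn, (m, w) ∉ R → ¬ (p (Sum.inl m)).lt (Sum.inl m) (Sum.inr w)) :
    damProp p R m = none := by
  rw [damProp, dif_neg]
  rintro ⟨o, ho⟩
  obtain ⟨⟨w, rfl, hR⟩, hlt⟩ := (Finset.mem_filter.mp ho).2
  exact h w hR hlt

lemma notMem_of_mem_damRej {mw : Mn × Wn} (h : mw ∈ damRej p R) : mw ∉ R :=
  notMem_of_damProp_eq_some h.1

/-- A woman receiving two proposals rejects the man she likes less. -/
lemma eq_of_damProp_eq_of_damRej_eq_empty (hR : damRej p R = ∅) {m m' : Mn} {w : Wn}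
    (hm : damProp p R m = some (Sum.inr w)) (hm' : damProp p R m' = some (Sum.inr w)) :
    m = m' := by
  let _ := p (Sum.inr w)
  wlog hlt : (Sum.inl m : Mn ⊕ Wn) < Sum.inl m' generalizing m m'
  · rcases lt_trichotomy (Sum.inl m : Mn ⊕ Wn) (Sum.inl m') with h | h | h
    · exact this hm hm' h
    · exact Sum.inl.inj h
    · exact (this hm' hm h).symm
  have hrej : (m, w) ∈ damRej p R ∨ (m', w) ∈ damRej p R := by
    by_cases hacc : (p (Sum.inr w)).lt (Sum.inr w) (Sum.inl m')
    · exact Or.inl ⟨hm, Or.inr ⟨m', hm', hacc, hlt⟩⟩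
    · exact Or.inr ⟨hm', Or.inl hacc⟩
  simp [hR] at hrej

variable (p) in
def damRejections : ℕ → Set (Mn × Wn)
  | 0 => ∅
  | t + 1 => damRejections t ∪ damRej p (damRejections t)

variable (p) in
/-- The rejection sets increase and stay disjoint from the new rejections, so in the
finite lattice of sets of pairs they stabilise, and then nobody is rejected any more. -/
lemma exists_damRej_damRejections_eq_empty : ∃ k, damRej p (damRejections p k) = ∅ := by
  have hmono : Monotone (damRejections p) :=
    monotone_nat_of_le_succ fun t => Set.subset_union_left
  obtain ⟨k, hk⟩ := WellFoundedGT.monotone_chain_condition ⟨damRejections p, hmono⟩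
  refine ⟨k, Set.eq_empty_of_forall_notMem fun mw hmw => notMem_of_mem_damRej hmw ?_⟩
  have hstable : damRejections p (k + 1) = damRejections p k := (hk (k + 1) k.le_succ).symm
  exact hstable ▸ Set.mem_union_right _ hmw

lemma exists_matching_of_damRej_eq_empty (hR : damRej p R = ∅) :
    ∃ μ : (Mn ⊕ Wn) → (Mn ⊕ Wn),
      (∀ m : Mn, μ (Sum.inl m) = (damProp p R m).getD (Sum.inl m)) ∧
      (∀ (w : Wn) (m : Mn), damProp p R m = some (Sum.inr w) → μ (Sum.inr w) = Sum.inl m) ∧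
      (∀ w : Wn, (∀ m : Mn, damProp p R m ≠ some (Sum.inr w)) →
        μ (Sum.inr w) = Sum.inr w) := by
  refine ⟨Sum.elim (fun m => (damProp p R m).getD (Sum.inl m)) fun w =>
      if h : ∃ m, damProp p R m = some (Sum.inr w) then Sum.inl h.choose else Sum.inr w,
    fun m => rfl, fun w m hm => ?_, fun w hw => ?_⟩
  · have hex : ∃ m, damProp p R m = some (Sum.inr w) := ⟨m, hm⟩
    simp only [Sum.elim_inr, dif_pos hex]
    exact congrArg Sum.inl (eq_of_damProp_eq_of_damRej_eq_empty hR hex.choose_spec hm)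
  · simp only [Sum.elim_inr, dif_neg (not_exists.mpr hw)]

lemma damRuns_of_damRejections {μ : (Mn ⊕ Wn) → (Mn ⊕ Wn)} (k : ℕ)
    (hlt : ∀ t < k, damRej p (damRejections p t) ≠ ∅)
    (hk : damRej p (damRejections p k) = ∅)
    (hmen : ∀ m : Mn, μ (Sum.inl m) = (damProp p (damRejections p k) m).getD (Sum.inl m))
    (hheld : ∀ (w : Wn) (m : Mn), damProp p (damRejections p k) m = some (Sum.inr w) →
      μ (Sum.inr w) = Sum.inl m)
    (hsingle : ∀ w : Wn, (∀ m : Mn, damProp p (damRejections p k) m ≠ some (Sum.inr w)) →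
      μ (Sum.inr w) = Sum.inr w) :
    DAMRuns p μ :=
  ⟨k, damRejections p, rfl, fun t ht => ⟨hlt t ht, rfl⟩, hk, hmen, hheld, hsingle⟩

variable (p) in
lemma exists_damRuns : ∃ μ, DAMRuns p μ := by
  have hex := exists_damRej_damRejections_eq_empty p
  obtain ⟨μ, hmen, hheld, hsingle⟩ := exists_matching_of_damRej_eq_empty (Nat.find_spec hex)
  exact ⟨μ, damRuns_of_damRejections _ (fun t ht => Nat.find_min hex ht) (Nat.find_spec hex)
    hmen hheld hsingle⟩

lemma DAMRuns.unique {μ μ' : (Mn ⊕ Wn) → (Mn ⊕ Wn)} (h : DAMRuns p μ)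
    (h' : DAMRuns p μ') : μ = μ' := by
  obtain ⟨k, R, hR0, hrec, hk, hmen, hheld, hsingle⟩ := h
  obtain ⟨k', R', hR0', hrec', hk', hmen', hheld', hsingle'⟩ := h'
  have hagree : ∀ t, t ≤ k → t ≤ k' → R t = R' t := by
    intro t
    induction t with
    | zero => exact fun _ _ => hR0.trans hR0'.symm
    | succ t ih =>
      intro ht ht'
      rw [(hrec t ht).2, (hrec' t ht').2, ih (by omega) (by omega)]
  have hkk : k = k' := by
    by_contra hne
    rcases Nat.lt_or_gt_of_ne hne with h | h
    · exact (hrec' k h).1 (hagree k le_rfl h.le ▸ hk)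
    · exact (hrec k' h).1 ((hagree k' h.le le_rfl).symm ▸ hk')
  subst hkk
  have hRR := hagree k le_rfl le_rfl
  funext o
  rcases o with m | w
  · rw [hmen m, hmen' m, hRR]
  · by_cases hex : ∃ m, damProp p (R k) m = some (Sum.inr w)
    · obtain ⟨m, hm⟩ := hex
      rw [hheld w m hm, hheld' w m (hRR ▸ hm)]
    · push Not at hex
      rw [hsingle w hex, hsingle' w (hRR ▸ hex)]

variable (p) in
noncomputable def deferredAcceptance : (Mn ⊕ Wn) → (Mn ⊕ Wn) := (exists_damRuns p).choose

lemma damRuns_deferredAcceptance : DAMRuns p (deferredAcceptance p) :=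
  (exists_damRuns p).choose_spec

lemma deferredAcceptance_eq {μ : (Mn ⊕ Wn) → (Mn ⊕ Wn)} (h : DAMRuns p μ) :
    deferredAcceptance p = μ :=
  damRuns_deferredAcceptance.unique h

end DeferredAcceptance

section RankProfile

variable {ι O : Type}

/-- Agent `i` ranks objects by the score `r i`, higher scores being better. -/
abbrev rankProfile (r : ι → O → ℕ) (hr : ∀ i, Function.Injective (r i)) :
    ι → LinearOrder O :=
  fun i => LinearOrder.lift' (r i) (hr i)

variable {r : ι → O → ℕ} {hr : ∀ i, Function.Injective (r i)}

@[simp]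
lemma rankProfile_lt {i : ι} {a b : O} : (rankProfile r hr i).lt a b ↔ r i a < r i b := Iff.rfl

@[simp]
lemma rankProfile_le {i : ι} {a b : O} : (rankProfile r hr i).le a b ↔ r i a ≤ r i b := Iff.rfl

lemma tau1_rankProfile [Fintype O] [Nonempty O] {μ : ι → O}
    (h : ∀ i b, r i b ≤ r i (μ i)) : tau1 (rankProfile r hr) = μ := by
  funext i
  let _ := rankProfile r hr i
  rw [tau1, topObj, Finset.max'_eq_iff]
  exact ⟨Finset.mem_univ _, fun b _ => h i b⟩

end RankProfile

namespace DAExample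

/-- The common top allocation of the two profiles below: men `0, 1` want women `0, 1`,
women `0, 1` want men `1, 0`, and man `2` and woman `2` want to stay single. -/
def topAlloc : (Fin 3 ⊕ Fin 3) → (Fin 3 ⊕ Fin 3) :=
  Sum.elim ![.inr 0, .inr 1, .inl 2] ![.inl 1, .inl 0, .inr 2]

/-- Row `o` lists agent `o`'s scores of `m₀, m₁, m₂` and then of `w₀, w₁, w₂`. -/
def rankA : (Fin 3 ⊕ Fin 3) → (Fin 3 ⊕ Fin 3) → ℕ :=
  Sum.elim
    ![Sum.elim ![4, 0, 1] ![5, 2, 3],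
      Sum.elim ![0, 4, 1] ![2, 5, 3],
      Sum.elim ![0, 1, 5] ![2, 3, 4]]
    ![Sum.elim ![4, 5, 0] ![3, 1, 2],
      Sum.elim ![5, 4, 0] ![1, 3, 2],
      Sum.elim ![0, 1, 2] ![3, 4, 5]]

def rankB : (Fin 3 ⊕ Fin 3) → (Fin 3 ⊕ Fin 3) → ℕ :=
  Sum.elim
    ![Sum.elim ![3, 0, 1] ![5, 4, 2],
      Sum.elim ![0, 3, 1] ![4, 5, 2],
      Sum.elim ![0, 1, 5] ![2, 3, 4]]
    ![Sum.elim ![0, 5, 1] ![4, 2, 3],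
      Sum.elim ![5, 4, 0] ![1, 3, 2],
      Sum.elim ![0, 1, 2] ![3, 4, 5]]

abbrev profileA : (Fin 3 ⊕ Fin 3) → LinearOrder (Fin 3 ⊕ Fin 3) :=
  rankProfile rankA (by decide)

abbrev profileB : (Fin 3 ⊕ Fin 3) → LinearOrder (Fin 3 ⊕ Fin 3) :=
  rankProfile rankB (by decide)

lemma tau1_profileA : tau1 profileA = topAlloc :=
  tau1_rankProfile (by decide)

lemma tau1_profileB : tau1 profileB = topAlloc :=
  tau1_rankProfile (by decide)

lemma topAlloc_notMem_marriageC : topAlloc ∉ MarriageC (Fin 3) (Fin 3) :=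
  fun h => absurd (h.2.2 (.inl 0)) (by decide)

lemma damProp_profileA :
    damProp profileA ∅ = ![some (.inr 0), some (.inr 1), none] := by
  funext m
  fin_cases m
  all_goals first | apply damProp_eq_some | apply damProp_eq_none
  all_goals simp only [rankProfile_lt, rankProfile_le, Set.mem_empty_iff_false]; decide

lemma damProp_profileB_zero :
    damProp profileB ∅ = ![some (.inr 0), some (.inr 1), none] := by
  funext m
  fin_cases m
  all_goals first | apply damProp_eq_some | apply damProp_eq_none
  all_goals simp only [rankProfile_lt, rankProfile_le, Set.mem_empty_iff_false]; decide

lemma damProp_profileB_one :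
    damProp profileB {(0, 0)} = ![some (.inr 1), some (.inr 1), none] := by
  funext m
  fin_cases m
  all_goals first | apply damProp_eq_some | apply damProp_eq_none
  all_goals simp only [rankProfile_lt, rankProfile_le, Set.mem_singleton_iff]; decide

lemma damProp_profileB_two :
    damProp profileB {(0, 0), (1, 1)} = ![some (.inr 1), some (.inr 0), none] := by
  funext m
  fin_cases m
  all_goals first | apply damProp_eq_some | apply damProp_eq_none
  all_goals
    simp only [rankProfile_lt, rankProfile_le, Set.mem_insert_iff, Set.mem_singleton_iff]
    decide

lemma damRej_profileA : damRej profileA ∅ = ∅ := by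
  ext ⟨m, w⟩
  simp only [damRej, damProp_profileA, rankProfile_lt, Set.mem_ofPred_eq,
    Set.mem_empty_iff_false]
  revert m w
  decide

lemma damRej_profileB_zero : damRej profileB ∅ = {(0, 0)} := by
  ext ⟨m, w⟩
  simp only [damRej, damProp_profileB_zero, rankProfile_lt, Set.mem_ofPred_eq,
    Set.mem_singleton_iff]
  revert m w
  decide

lemma damRej_profileB_one : damRej profileB {(0, 0)} = {(1, 1)} := by
  ext ⟨m, w⟩
  simp only [damRej, damProp_profileB_one, rankProfile_lt, Set.mem_ofPred_eq,
    Set.mem_singleton_iff]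
  revert m w
  decide

lemma damRej_profileB_two : damRej profileB {(0, 0), (1, 1)} = ∅ := by
  ext ⟨m, w⟩
  simp only [damRej, damProp_profileB_two, rankProfile_lt, Set.mem_ofPred_eq,
    Set.mem_empty_iff_false]
  revert m w
  decide

lemma damRejections_profileB_one : damRejections profileB 1 = {(0, 0)} := by
  simp [damRejections, damRej_profileB_zero]

lemma damRejections_profileB_two : damRejections profileB 2 = {(0, 0), (1, 1)} := by
  rw [damRejections, damRejections_profileB_one, damRej_profileB_one, Set.singleton_union]

def matchingA : (Fin 3 ⊕ Fin 3) → (Fin 3 ⊕ Fin 3) :=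
  Sum.elim ![.inr 0, .inr 1, .inl 2] ![.inl 0, .inl 1, .inr 2]

/-- Deferred acceptance at `profileB`: woman `0` rejects man `0`, who then displaces
man `1` at woman `1`, who in turn is accepted by woman `0`. -/
def matchingB : (Fin 3 ⊕ Fin 3) → (Fin 3 ⊕ Fin 3) :=
  Sum.elim ![.inr 1, .inr 0, .inl 2] ![.inl 1, .inl 0, .inr 2]

lemma damRuns_profileA : DAMRuns profileA matchingA := by
  apply damRuns_of_damRejections 0 (fun t ht => absurd ht t.not_lt_zero) damRej_profileA
  all_goals simp only [damRejections, damProp_profileA]; decide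

lemma damRuns_profileB : DAMRuns profileB matchingB := by
  apply damRuns_of_damRejections 2
  · intro t ht
    interval_cases t
    · simp [damRejections, damRej_profileB_zero]
    · simp [damRejections_profileB_one, damRej_profileB_one]
  all_goals simp only [damRejections_profileB_two, damRej_profileB_two, damProp_profileB_two]
  all_goals decide

end DAExample

open DAExample in
lemma not_fixedComp_deferredAcceptance :
    ¬ FixedComp (MarriageC (Fin 3) (Fin 3)) deferredAcceptance := by
  intro h
  obtain ⟨i, hi⟩ := h topAlloc topAlloc_notMem_marriageC
  rcases i with m | w
  · have hmen : ∀ m, matchingA (.inl m) = topAlloc (.inl m) := by decide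
    exact hi profileA tau1_profileA (by rw [deferredAcceptance_eq damRuns_profileA, hmen])
  · have hwomen : ∀ w, matchingB (.inr w) = topAlloc (.inr w) := by decide
    exact hi profileB tau1_profileB (by rw [deferredAcceptance_eq damRuns_profileB, hwomen])

/-- in the marriage problem with three men and three women, the
man-proposing deferred acceptance mechanism violates the Fixed compromiser condition,
and consequently is not a local priority mechanism. -/
theorem marriageDA_not_localPriority :
    ∃ f : ((Fin 3 ⊕ Fin 3) → LinearOrder (Fin 3 ⊕ Fin 3)) →
          (Fin 3 ⊕ Fin 3) → (Fin 3 ⊕ Fin 3),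
      (∀ p, DAMRuns p (f p)) ∧
      ¬ FixedComp (MarriageC (Fin 3) (Fin 3)) f ∧
      ¬ ∃ α, lpInduces (MarriageC (Fin 3) (Fin 3)) α f :=
  ⟨deferredAcceptance, fun _ => damRuns_deferredAcceptance, not_fixedComp_deferredAcceptance,
    fun ⟨_, hα⟩ => not_fixedComp_deferredAcceptance (fixedComp_of_lpInduces hα)⟩
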